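/- arXiv:2312.17299 — 3 statements merged into one kernel-verified Lean document; each statement's English description precedes it below -/
import Mathlib

section
/- Let R be a semiprime ring and S ∈ Den_l(R, 0) a left denominator set of R with ass_l(S) = 0. Then the left localization S⁻¹R is a semiprime ring. -/
/- Common framework: two-sided ideals, prime ideals, denominator sets and
   left localizations of (possibly noncommutative) rings, described
   axiomatically via their characteristic properties. -/

namespace BavulaMinPrimes

/-- A subset of a ring is a two-sided ideal. -/
def IsIdealSet {R : Type*} [Ring R] (I : Set R) : Prop :=
  (0 : R) ∈ I ∧ (∀ a ∈ I, ∀ b ∈ I, a + b ∈ I) ∧ (∀ a ∈ I, -a ∈ I) ∧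
    ∀ a ∈ I, ∀ r : R, r * a ∈ I ∧ a * r ∈ I

/-- A (two-sided) prime ideal: a proper ideal `P` such that `A * B ⊆ P`
implies `A ⊆ P` or `B ⊆ P` for all ideals `A`, `B`. -/
def IsPrimeIdealSet {R : Type*} [Ring R] (P : Set R) : Prop :=
  IsIdealSet P ∧ P ≠ Set.univ ∧
    ∀ A B : Set R, IsIdealSet A → IsIdealSet B →
      (∀ a ∈ A, ∀ b ∈ B, a * b ∈ P) → A ⊆ P ∨ B ⊆ P

/-- A completely prime ideal: the factor ring is a domain. -/
def IsCompletelyPrimeIdealSet {R : Type*} [Ring R] (P : Set R) : Prop :=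
  IsIdealSet P ∧ P ≠ Set.univ ∧ ∀ a b : R, a * b ∈ P → a ∈ P ∨ b ∈ P

/-- A minimal prime ideal of a ring. -/
def IsMinimalPrimeIdealSet {R : Type*} [Ring R] (P : Set R) : Prop :=
  IsPrimeIdealSet P ∧ ∀ P' : Set R, IsPrimeIdealSet P' → P' ⊆ P → P' = P

/-- A prime minimal over an ideal `A`. -/
def IsMinimalPrimeOver {R : Type*} [Ring R] (A P : Set R) : Prop :=
  IsPrimeIdealSet P ∧ A ⊆ P ∧
    ∀ P' : Set R, IsPrimeIdealSet P' → A ⊆ P' → P' ⊆ P → P' = P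

/-- The set `min(R)` of minimal primes of `R`. -/
def minPrimes (R : Type*) [Ring R] : Set (Set R) := { P | IsMinimalPrimeIdealSet P }

/-- The prime radical: intersection of all prime ideals. -/
def primeRadicalSet (R : Type*) [Ring R] : Set R :=
  { r : R | ∀ P : Set R, IsPrimeIdealSet P → r ∈ P }

/-- A ring is semiprime if its prime radical is zero. -/
def IsSemiprimeRing (R : Type*) [Ring R] : Prop := primeRadicalSet R = {0}

/-- A ring is prime if its zero ideal is a prime ideal. -/
def IsPrimeRing (R : Type*) [Ring R] : Prop := IsPrimeIdealSet ({0} : Set R)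

/-- A multiplicative subset: `1 ∈ S`, `0 ∉ S`, closed under multiplication. -/
def IsMulSet {R : Type*} [Ring R] (S : Set R) : Prop :=
  (1 : R) ∈ S ∧ (0 : R) ∉ S ∧ ∀ s ∈ S, ∀ t ∈ S, s * t ∈ S

/-- The left Ore condition: `S r ∩ R s ≠ ∅`. -/
def LeftOre {R : Type*} [Ring R] (S : Set R) : Prop :=
  ∀ r : R, ∀ s ∈ S, ∃ s' ∈ S, ∃ r' : R, s' * r = r' * s

/-- The right Ore condition: `r S ∩ s R ≠ ∅`. -/
def RightOre {R : Type*} [Ring R] (S : Set R) : Prop :=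
  ∀ r : R, ∀ s ∈ S, ∃ s' ∈ S, ∃ r' : R, r * s' = s * r'

/-- A left denominator set: a left Ore multiplicative set such that
`r s = 0` (with `s ∈ S`) implies `t r = 0` for some `t ∈ S`. -/
def IsLeftDenominatorSet {R : Type*} [Ring R] (S : Set R) : Prop :=
  IsMulSet S ∧ LeftOre S ∧ ∀ r : R, ∀ s ∈ S, r * s = 0 → ∃ t ∈ S, t * r = 0

/-- A right denominator set. -/
def IsRightDenominatorSet {R : Type*} [Ring R] (S : Set R) : Prop :=
  IsMulSet S ∧ RightOre S ∧ ∀ r : R, ∀ s ∈ S, s * r = 0 → ∃ t ∈ S, r * t = 0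

/-- `ass_l(S) = { r | s r = 0 for some s ∈ S }`. -/
def lAss {R : Type*} [Ring R] (S : Set R) : Set R := { r : R | ∃ s ∈ S, s * r = 0 }

/-- `f : R →+* Q` realizes `Q` as the left localization `S⁻¹R`:
elements of `S` become units, every element of `Q` is a left fraction
`(f s)⁻¹ (f r)`, and the kernel of `f` is `ass_l(S)`.  These properties
characterize `S⁻¹R` up to a unique `R`-isomorphism. -/
structure IsLeftLocalization {R Q : Type*} [Ring R] [Ring Q]
    (S : Set R) (f : R →+* Q) : Prop where
  isUnit : ∀ s ∈ S, IsUnit (f s)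
  surj : ∀ q : Q, ∃ s ∈ S, ∃ r : R, f s * q = f r
  ker : ∀ r : R, f r = 0 ↔ r ∈ lAss S

/-- `S⁻¹I = { s⁻¹ a | s ∈ S, a ∈ I }` as a subset of the localization `Q`:
`q ∈ S⁻¹I` iff `f s * q = f a` for some `s ∈ S`, `a ∈ I`. -/
def locSet {R Q : Type*} [Ring R] [Ring Q] (f : R →+* Q) (S : Set R)
    (I : Set R) : Set Q :=
  { q : Q | ∃ s ∈ S, ∃ a ∈ I, f s * q = f a }

/-- A normal element: `R n = n R`. -/
def IsNormalElement {R : Type*} [Ring R] (n : R) : Prop :=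
  (∀ r : R, ∃ r' : R, r * n = n * r') ∧ ∀ r : R, ∃ r' : R, n * r = r' * n

/-- A prime rich ring: every ideal contains a finite product of prime ideals
containing it (the empty product being the whole ring). -/
def IsPrimeRich (R : Type*) [Ring R] : Prop :=
  ∀ A : Set R, IsIdealSet A →
    ∃ (n : ℕ) (P : Fin n → Set R),
      (∀ i, IsPrimeIdealSet (P i) ∧ A ⊆ P i) ∧
      ∀ x : Fin n → R, (∀ i, x i ∈ P i) → (List.ofFn x).prod ∈ A

/-- An ideal which is finitely generated as a right `R`-module. -/
def IsFGRightIdeal {R : Type*} [Ring R] (I : Set R) : Prop :=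
  ∃ (m : ℕ) (g : Fin m → R), (∀ i, g i ∈ I) ∧
    ∀ x ∈ I, ∃ c : Fin m → R, x = ∑ i, g i * c i

/-! A ring is semiprime exactly when `x R x = 0` forces `x = 0`: a prime ideal containing
`x R x` contains `x`, and conversely, if every `y ≠ 0` admits `r` with `y r y ≠ 0`, iterating
`y ↦ y r y` from `x ≠ 0` gives an m-system avoiding `0`, and an ideal maximal among those
disjoint from it is a prime ideal missing `x`. In `S⁻¹R` a nonzero `q` with `q Q q = 0` would,
after clearing the denominator `f s * q = f a`, give a nonzero `a` with `a R a ⊆ ker f = 0`. -/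

open scoped Pointwise

section Ideals

variable {R : Type*} [Ring R] {I J : Set R}

theorem IsIdealSet.zero_mem (hI : IsIdealSet I) : (0 : R) ∈ I := hI.1

theorem IsIdealSet.add_mem (hI : IsIdealSet I) {a b : R} (ha : a ∈ I) (hb : b ∈ I) :
    a + b ∈ I :=
  hI.2.1 a ha b hb

theorem IsIdealSet.neg_mem (hI : IsIdealSet I) {a : R} (ha : a ∈ I) : -a ∈ I := hI.2.2.1 a ha

theorem IsIdealSet.mul_mem_left (hI : IsIdealSet I) (r : R) {a : R} (ha : a ∈ I) :
    r * a ∈ I :=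
  (hI.2.2.2 a ha r).1

theorem IsIdealSet.mul_mem_right (hI : IsIdealSet I) {a : R} (ha : a ∈ I) (r : R) :
    a * r ∈ I :=
  (hI.2.2.2 a ha r).2

theorem isIdealSet_zero : IsIdealSet ({0} : Set R) := by
  refine ⟨rfl, ?_, ?_, ?_⟩ <;> simp

theorem IsIdealSet.add (hI : IsIdealSet I) (hJ : IsIdealSet J) : IsIdealSet (I + J) := by
  refine ⟨⟨0, hI.zero_mem, 0, hJ.zero_mem, add_zero 0⟩, ?_, ?_, ?_⟩
  · rintro _ ⟨a, ha, b, hb, rfl⟩ _ ⟨a', ha', b', hb', rfl⟩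
    exact ⟨a + a', hI.add_mem ha ha', b + b', hJ.add_mem hb hb', add_add_add_comm a a' b b'⟩
  · rintro _ ⟨a, ha, b, hb, rfl⟩
    exact ⟨-a, hI.neg_mem ha, -b, hJ.neg_mem hb, (neg_add a b).symm⟩
  · rintro _ ⟨a, ha, b, hb, rfl⟩ r
    exact ⟨⟨r * a, hI.mul_mem_left r ha, r * b, hJ.mul_mem_left r hb, (mul_add r a b).symm⟩,
      ⟨a * r, hI.mul_mem_right ha r, b * r, hJ.mul_mem_right hb r, (add_mul a b r).symm⟩⟩

theorem IsIdealSet.sUnion {c : Set (Set R)} (hc : ∀ I ∈ c, IsIdealSet I)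
    (hchain : IsChain (· ⊆ ·) c) (hne : c.Nonempty) : IsIdealSet (⋃₀ c) := by
  obtain ⟨I₀, hI₀⟩ := hne
  refine ⟨⟨I₀, hI₀, (hc I₀ hI₀).zero_mem⟩, ?_, ?_, ?_⟩
  · rintro a ⟨I, hI, ha⟩ b ⟨J, hJ, hb⟩
    rcases hchain.total hI hJ with hIJ | hJI
    · exact ⟨J, hJ, (hc J hJ).add_mem (hIJ ha) hb⟩
    · exact ⟨I, hI, (hc I hI).add_mem ha (hJI hb)⟩
  · rintro a ⟨I, hI, ha⟩
    exact ⟨I, hI, (hc I hI).neg_mem ha⟩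
  · rintro a ⟨I, hI, ha⟩ r
    exact ⟨⟨I, hI, (hc I hI).mul_mem_left r ha⟩, ⟨I, hI, (hc I hI).mul_mem_right ha r⟩⟩

/-- The two ideals `B = {b | x R b ⊆ P}` and `A = {a | a R B ⊆ P}` both contain `x` and
satisfy `A B ⊆ P`. -/
theorem IsPrimeIdealSet.mem_of_forall_mul_mul_mem {P : Set R} (hP : IsPrimeIdealSet P) {x : R}
    (hx : ∀ r, x * r * x ∈ P) : x ∈ P := by
  have hPi : IsIdealSet P := hP.1
  set B : Set R := {b | ∀ r, x * r * b ∈ P}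
  set A : Set R := {a | ∀ r, ∀ b ∈ B, a * r * b ∈ P}
  have hB : IsIdealSet B := by
    refine ⟨fun r => by simpa using hPi.zero_mem, ?_, ?_, ?_⟩
    · intro b hb b' hb' r
      simpa only [mul_add] using hPi.add_mem (hb r) (hb' r)
    · intro b hb r
      simpa only [mul_neg] using hPi.neg_mem (hb r)
    · intro b hb s
      exact ⟨fun r => by simpa only [mul_assoc] using hb (r * s),
        fun r => by simpa only [mul_assoc] using hPi.mul_mem_right (hb r) s⟩
  have hA : IsIdealSet A := by
    refine ⟨fun r b _ => by simpa using hPi.zero_mem, ?_, ?_, ?_⟩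
    · intro a ha a' ha' r b hb
      simpa only [add_mul] using hPi.add_mem (ha r b hb) (ha' r b hb)
    · intro a ha r b hb
      simpa only [neg_mul] using hPi.neg_mem (ha r b hb)
    · intro a ha s
      exact ⟨fun r b hb => by simpa only [mul_assoc] using hPi.mul_mem_left s (ha r b hb),
        fun r b hb => by simpa only [mul_assoc] using ha (s * r) b hb⟩
  have hAB : ∀ a ∈ A, ∀ b ∈ B, a * b ∈ P := fun a ha b hb => by
    simpa using ha 1 b hb
  rcases hP.2.2 A B hA hB hAB with hAP | hBP
  · exact hAP fun r b hb => hb r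
  · exact hBP hx

end Ideals

section MSystem

variable {R : Type*} [Ring R]

/-- The noncommutative analogue of a multiplicative set: the complement of a prime ideal is
an m-system. -/
def IsMSystem (M : Set R) : Prop := ∀ a ∈ M, ∀ b ∈ M, ∃ r, a * r * b ∈ M

theorem isPrimeIdealSet_of_maximal_disjoint {M P : Set R} (hM : IsMSystem M)
    (hMne : M.Nonempty) (hP : Maximal (fun I => IsIdealSet I ∧ Disjoint I M) P) :
    IsPrimeIdealSet P := by
  obtain ⟨⟨hPi, hPM⟩, hPmax⟩ := hP
  refine ⟨hPi, ?_, fun A B hA hB hAB => ?_⟩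
  · rintro rfl
    exact hMne.ne_empty (Set.univ_disjoint.1 hPM)
  have meets : ∀ C, IsIdealSet C → ¬C ⊆ P → ∃ p ∈ P, ∃ c ∈ C, p + c ∈ M := by
    intro C hC hCP
    by_contra! hdisj
    have hle : P + C ⊆ P := hPmax ⟨hPi.add hC, Set.disjoint_left.2 ?_⟩
      fun p hp => ⟨p, hp, 0, hC.zero_mem, add_zero p⟩
    · exact hCP fun c hc => hle ⟨0, hPi.zero_mem, c, hc, zero_add c⟩
    · rintro _ ⟨p, hp, c, hc, rfl⟩
      exact hdisj p hp c hc
  by_contra! hAB'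
  obtain ⟨p, hp, a, ha, hm⟩ := meets A hA hAB'.1
  obtain ⟨p', hp', b, hb, hm'⟩ := meets B hB hAB'.2
  obtain ⟨r, hr⟩ := hM _ hm _ hm'
  have hexpand : (p + a) * r * (p' + b) = p * (r * (p' + b)) + (a * r * p' + a * r * b) := by
    noncomm_ring
  have hmem : (p + a) * r * (p' + b) ∈ P := by
    rw [hexpand]
    exact hPi.add_mem (hPi.mul_mem_right hp _)
      (hPi.add_mem (hPi.mul_mem_left _ hp') (hAB _ (hA.mul_mem_right ha r) b hb))
  exact Set.disjoint_left.1 hPM hmem hr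

theorem exists_isPrimeIdealSet_disjoint {M : Set R} (hM : IsMSystem M) (hMne : M.Nonempty)
    (h0 : (0 : R) ∉ M) : ∃ P, IsPrimeIdealSet P ∧ Disjoint P M := by
  obtain ⟨P, -, hP⟩ := zorn_subset_nonempty {I | IsIdealSet I ∧ Disjoint I M}
    (fun c hc hchain hne => ⟨⋃₀ c, ⟨IsIdealSet.sUnion (fun I hI => (hc hI).1) hchain hne,
      Set.disjoint_sUnion_left.2 fun I hI => (hc hI).2⟩, fun _ => Set.subset_sUnion_of_mem⟩)
    {0} ⟨isIdealSet_zero, Set.disjoint_singleton_left.2 h0⟩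
  exact ⟨P, isPrimeIdealSet_of_maximal_disjoint hM hMne hP, hP.prop.2⟩

theorem exists_eq_mul_of_succ_eq_mul_mul {a : ℕ → R} (ha : ∀ n, ∃ r, a (n + 1) = a n * r * a n)
    {m k : ℕ} (hmk : m ≤ k) : (∃ u, a k = a m * u) ∧ ∃ v, a k = v * a m := by
  induction k, hmk using Nat.le_induction with
  | base => exact ⟨⟨1, (mul_one _).symm⟩, ⟨1, (one_mul _).symm⟩⟩
  | succ k _ ih =>
    obtain ⟨⟨u, hu⟩, ⟨v, hv⟩⟩ := ih
    obtain ⟨r, hr⟩ := ha k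
    refine ⟨⟨u * r * a k, ?_⟩, ⟨a k * r * v, ?_⟩⟩
    · rw [hr]; nth_rw 1 [hu]; noncomm_ring
    · rw [hr]; nth_rw 2 [hv]; noncomm_ring

theorem isMSystem_range_of_succ_eq_mul_mul {a : ℕ → R}
    (ha : ∀ n, ∃ r, a (n + 1) = a n * r * a n) : IsMSystem (Set.range a) := by
  rintro _ ⟨m, rfl⟩ _ ⟨n, rfl⟩
  obtain ⟨⟨u, hu⟩, -⟩ := exists_eq_mul_of_succ_eq_mul_mul ha (le_max_left m n)
  obtain ⟨-, ⟨v, hv⟩⟩ := exists_eq_mul_of_succ_eq_mul_mul ha (le_max_right m n)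
  obtain ⟨r, hr⟩ := ha (max m n)
  refine ⟨u * r * v, max m n + 1, ?_⟩
  rw [hr]; nth_rw 1 [hu]; nth_rw 1 [hv]; noncomm_ring

theorem exists_seq_succ_eq_mul_mul_of_ne_zero (h : ∀ y : R, y ≠ 0 → ∃ r, y * r * y ≠ 0)
    {x : R} (hx : x ≠ 0) :
    ∃ a : ℕ → R, a 0 = x ∧ (∀ n, a n ≠ 0) ∧ ∀ n, ∃ r, a (n + 1) = a n * r * a n := by
  have step : ∀ y : {y : R // y ≠ 0}, ∃ z : {y : R // y ≠ 0}, ∃ r, z.1 = y.1 * r * y.1 :=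
    fun y => (h y.1 y.2).elim fun r hr => ⟨⟨_, hr⟩, r, rfl⟩
  choose F hF using step
  refine ⟨fun n => (F^[n] ⟨x, hx⟩).1, rfl, fun n => (F^[n] _).2, fun n => ?_⟩
  simp only [Function.iterate_succ_apply']
  exact hF _

theorem isSemiprimeRing_iff :
    IsSemiprimeRing R ↔ ∀ x : R, (∀ r, x * r * x = 0) → x = 0 := by
  constructor
  · intro hR x hx
    have hrad : x ∈ primeRadicalSet R := fun P hP =>
      hP.mem_of_forall_mul_mul_mem fun r => hx r ▸ hP.1.zero_mem
    rwa [hR] at hrad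
  · intro h
    refine Set.eq_singleton_iff_unique_mem.2 ⟨fun P hP => hP.1.zero_mem, fun x hx => ?_⟩
    by_contra hx0
    have h' : ∀ y : R, y ≠ 0 → ∃ r, y * r * y ≠ 0 := fun y hy => by
      by_contra! hyRy
      exact hy (h y hyRy)
    obtain ⟨a, rfl, ha0, ha⟩ := exists_seq_succ_eq_mul_mul_of_ne_zero h' hx0
    obtain ⟨P, hP, hPM⟩ := exists_isPrimeIdealSet_disjoint (isMSystem_range_of_succ_eq_mul_mul ha)
      (Set.range_nonempty a) (fun ⟨n, hn⟩ => ha0 n hn)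
    exact Set.disjoint_left.1 hPM (hx P hP) ⟨0, rfl⟩

end MSystem

theorem statement0_general {R Q : Type*} [Ring R] [Ring Q]
    {S : Set R} (hass : lAss S = ({0} : Set R))
    (f : R →+* Q) (hf : IsLeftLocalization S f)
    (hR : IsSemiprimeRing R) :
    IsSemiprimeRing Q := by
  rw [isSemiprimeRing_iff] at hR ⊢
  intro q hq
  obtain ⟨s, hs, a, hsa⟩ := hf.surj q
  have hker : ∀ b, f b = 0 → b = 0 := fun b hb => by simpa [hass] using (hf.ker b).1 hb
  have ha : a = 0 := hR a fun r => hker _ <| calc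
    f (a * r * a) = f s * (q * f (r * s) * q) := by
      rw [map_mul, map_mul, map_mul, ← hsa]; noncomm_ring
    _ = 0 := by rw [hq, mul_zero]
  exact (hf.isUnit s hs).mul_right_eq_zero.1 (by rw [hsa, ha, map_zero])

/-- If `R` is a semiprime ring and `S ∈ Den_l(R, 0)`, then the
left localization `S⁻¹R` is a semiprime ring. -/
theorem statement0 {R Q : Type*} [Ring R] [Ring Q]
    {S : Set R} (hS : IsLeftDenominatorSet S) (hass : lAss S = ({0} : Set R))
    (f : R →+* Q) (hf : IsLeftLocalization S f)
    (hR : IsSemiprimeRing R) :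
    IsSemiprimeRing Q :=
  statement0_general hass f hf hR

end BavulaMinPrimes
end

section
/- Let R be a semiprime ring with finitely many minimal prime ideals and S ∈ Den_l(R, 0) a left denominator set with ass_l(S) = 0. Then min(S⁻¹R) = { S⁻¹𝔭 | 𝔭 ∈ min(R) }; that is, the map min(R) → min(S⁻¹R), 𝔭 ↦ S⁻¹𝔭, is a bijection, and |min(S⁻¹R)| = |min(R)|. -/
/- Common framework: two-sided ideals, prime ideals, denominator sets and
   left localizations of (possibly noncommutative) rings, described
   axiomatically via their characteristic properties. -/

namespace BavulaMinPrimes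

/-!
Let `p` be a minimal prime of the semiprime ring `R` and `b` an element of the
intersection of the other (finitely many) minimal primes with `b ∉ p`. Then `p R b` and
`b R p` lie in every minimal prime, hence are zero, so by primeness `p` is both the left
and the right annihilator of `R b R`. Since `ass_l(S) = 0`, the elements of `S` are
regular, so `p` is `S`-saturated on both sides; this makes `S⁻¹p` a prime ideal of `S⁻¹R`
whose contraction is `p`. Conversely, the `S⁻¹p` intersect to `S⁻¹0 = 0`, so by prime
avoidance every prime of `S⁻¹R` contains one of them. Hence the minimal primes of `S⁻¹R`
are exactly the `S⁻¹p`, and `p` is recovered from `S⁻¹p` by contraction.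
-/

section Ideals

variable {T : Type*} [Ring T]

namespace IsIdealSet

theorem zero_mem_s1 {I : Set T} (hI : IsIdealSet I) : (0 : T) ∈ I := hI.1

theorem add_mem_s1 {I : Set T} (hI : IsIdealSet I) {a b : T} (ha : a ∈ I) (hb : b ∈ I) :
    a + b ∈ I :=
  hI.2.1 a ha b hb

theorem neg_mem_s1 {I : Set T} (hI : IsIdealSet I) {a : T} (ha : a ∈ I) : -a ∈ I :=
  hI.2.2.1 a ha

theorem mul_mem_left_s1 {I : Set T} (hI : IsIdealSet I) (r : T) {a : T} (ha : a ∈ I) :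
    r * a ∈ I :=
  (hI.2.2.2 a ha r).1

theorem mul_mem_right_s1 {I : Set T} (hI : IsIdealSet I) {a : T} (ha : a ∈ I) (r : T) :
    a * r ∈ I :=
  (hI.2.2.2 a ha r).2

theorem one_notMem {I : Set T} (hI : IsIdealSet I) (hne : I ≠ Set.univ) : (1 : T) ∉ I :=
  fun h1 => hne (Set.eq_univ_of_forall fun x => by simpa using hI.mul_mem_left_s1 x h1)

theorem sInter {F : Set (Set T)} (hF : ∀ A ∈ F, IsIdealSet A) : IsIdealSet (⋂₀ F) :=
  ⟨fun A hA => (hF A hA).zero_mem_s1,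
    fun _ ha _ hb A hA => (hF A hA).add_mem_s1 (ha A hA) (hb A hA),
    fun _ ha A hA => (hF A hA).neg_mem_s1 (ha A hA),
    fun _ ha r => ⟨fun A hA => (hF A hA).mul_mem_left_s1 r (ha A hA),
      fun A hA => (hF A hA).mul_mem_right_s1 (ha A hA) r⟩⟩

end IsIdealSet

namespace IsPrimeIdealSet

/-- `A = {x | x R b ⊆ P}` and `B = {y | A y ⊆ P}` are ideals with `a ∈ A`, `b ∈ B`
and `A B ⊆ P`. -/
theorem mem_or_mem {P : Set T} (hP : IsPrimeIdealSet P) {a b : T}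
    (h : ∀ m : T, a * m * b ∈ P) : a ∈ P ∨ b ∈ P := by
  have hPid := hP.1
  let A : Set T := {x | ∀ m, x * m * b ∈ P}
  have hA : IsIdealSet A :=
    ⟨fun m => by simpa using hPid.zero_mem_s1,
      fun x hx y hy m => by simpa [add_mul] using hPid.add_mem_s1 (hx m) (hy m),
      fun x hx m => by simpa using hPid.neg_mem_s1 (hx m),
      fun x hx r => ⟨fun m => by simpa [mul_assoc] using hPid.mul_mem_left_s1 r (hx m),
        fun m => by simpa [mul_assoc] using hx (r * m)⟩⟩
  let B : Set T := {y | ∀ x ∈ A, x * y ∈ P}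
  have hB : IsIdealSet B :=
    ⟨fun x _ => by simpa using hPid.zero_mem_s1,
      fun y hy z hz x hx => by simpa [mul_add] using hPid.add_mem_s1 (hy x hx) (hz x hx),
      fun y hy x hx => by simpa using hPid.neg_mem_s1 (hy x hx),
      fun y hy r => ⟨fun x hx => by
          simpa [mul_assoc] using hy (x * r) fun m => by simpa [mul_assoc] using hx (r * m),
        fun x hx => by simpa [mul_assoc] using hPid.mul_mem_right_s1 (hy x hx) r⟩⟩
  rcases hP.2.2 A B hA hB fun x hx y hy => hy x hx with hAP | hBP
  · exact Or.inl (hAP h)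
  · exact Or.inr (hBP fun x hx => by simpa using hx 1)

theorem of_forall_mul_mem {P : Set T} (hP : IsIdealSet P) (hne : P ≠ Set.univ)
    (h : ∀ a b : T, (∀ m : T, a * m * b ∈ P) → a ∈ P ∨ b ∈ P) : IsPrimeIdealSet P := by
  refine ⟨hP, hne, fun A B hA _ hAB => or_iff_not_imp_left.2 fun hAP => ?_⟩
  obtain ⟨a, haA, haP⟩ := Set.not_subset.1 hAP
  exact fun b hb => (h a b fun m => hAB _ (hA.mul_mem_right_s1 haA m) _ hb).resolve_left haP

theorem exists_mem_sInter_notMem {P : Set T} (hP : IsPrimeIdealSet P) {F : Set (Set T)}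
    (hF : F.Finite) (hFid : ∀ A ∈ F, IsIdealSet A) (hFP : ∀ A ∈ F, ¬A ⊆ P) :
    ∃ x ∈ ⋂₀ F, x ∉ P := by
  induction F, hF using Set.Finite.induction_on with
  | empty => exact ⟨1, by simp, hP.1.one_notMem hP.2.1⟩
  | @insert A G _ _ ih =>
    have hGid := fun B hB => hFid B (Set.mem_insert_of_mem A hB)
    obtain ⟨x, hxG, hxP⟩ := ih hGid fun B hB => hFP B (Set.mem_insert_of_mem A hB)
    obtain ⟨y, hyA, hyP⟩ := Set.not_subset.1 (hFP A (Set.mem_insert A G))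
    obtain ⟨m, hm⟩ : ∃ m, x * m * y ∉ P := by
      by_contra! hall
      exact (hP.mem_or_mem hall).elim hxP hyP
    refine ⟨x * m * y, Set.forall_mem_insert.2 ⟨?_, fun B hB => ?_⟩, hm⟩
    · exact (hFid A (Set.mem_insert A G)).mul_mem_left_s1 _ hyA
    · exact (hGid B hB).mul_mem_right_s1 ((hGid B hB).mul_mem_right_s1 (hxG B hB) m) y

theorem sInter_of_isChain {c : Set (Set T)} (hc : IsChain (· ⊆ ·) c) (hne : c.Nonempty)
    (h : ∀ P ∈ c, IsPrimeIdealSet P) : IsPrimeIdealSet (⋂₀ c) := by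
  obtain ⟨P₀, hP₀⟩ := hne
  refine of_forall_mul_mem (IsIdealSet.sInter fun P hP => (h P hP).1)
    (fun htop => (h P₀ hP₀).2.1 (Set.eq_univ_of_univ_subset
      (htop ▸ Set.sInter_subset_of_mem hP₀))) fun a b hab => ?_
  refine or_iff_not_imp_left.2 fun ha => ?_
  obtain ⟨P₁, hP₁, haP₁⟩ : ∃ P₁ ∈ c, a ∉ P₁ := by simpa using ha
  intro P hP
  rcases hc.total hP hP₁ with hPP₁ | hP₁P
  · exact ((h P hP).mem_or_mem fun m => hab m P hP).resolve_left fun haP => haP₁ (hPP₁ haP)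
  · exact hP₁P ((((h P₁ hP₁).mem_or_mem fun m => hab m P₁ hP₁)).resolve_left haP₁)

theorem exists_minimal_subset {P : Set T} (hP : IsPrimeIdealSet P) :
    ∃ q ∈ minPrimes T, q ⊆ P := by
  obtain ⟨m, hmP, hm⟩ := zorn_superset_nonempty {P' : Set T | IsPrimeIdealSet P'}
    (fun c hc hchain hne => ⟨⋂₀ c, sInter_of_isChain hchain hne hc,
      fun _ hs => Set.sInter_subset_of_mem hs⟩) P hP
  exact ⟨m, ⟨hm.1, fun P' hP' hsub => hsub.antisymm (hm.2 hP' hsub)⟩, hmP⟩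

end IsPrimeIdealSet

theorem IsSemiprimeRing.sInter_minPrimes (hR : IsSemiprimeRing T) :
    ⋂₀ minPrimes T = ({0} : Set T) := by
  refine Set.Subset.antisymm (fun r hr => ?_) ?_
  · rw [← hR]
    intro P hP
    obtain ⟨q, hq, hqP⟩ := hP.exists_minimal_subset
    exact hqP (hr q hq)
  · rintro _ rfl P hP
    exact hP.1.1.zero_mem_s1

theorem IsSemiprimeRing.exists_minPrime_eq_annihilator (hR : IsSemiprimeRing T)
    (hfin : (minPrimes T).Finite) {p : Set T} (hp : p ∈ minPrimes T) :
    ∃ b ∉ p, ∀ r : T, (r ∈ p ↔ ∀ m, r * m * b = 0) ∧ (r ∈ p ↔ ∀ m, b * m * r = 0) := by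
  have hid : ∀ q ∈ minPrimes T, IsIdealSet q := fun q hq => hq.1.1
  have hpid := hid p hp
  obtain ⟨b, hb, hbp⟩ := hp.1.exists_mem_sInter_notMem
    (F := {q | q ∈ minPrimes T ∧ q ≠ p}) (hfin.subset fun _ hq => hq.1)
    (fun q hq => hid q hq.1) fun q hq hqp => hq.2 (hp.2 q hq.1.1 hqp)
  have eq_zero : ∀ z ∈ p, (∀ q ∈ minPrimes T, q ≠ p → z ∈ q) → z = 0 := fun z hzp hz => by
    rw [← Set.mem_singleton_iff, ← hR.sInter_minPrimes]
    intro q hq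
    by_cases hqp : q = p
    · exact hqp ▸ hzp
    · exact hz q hq hqp
  refine ⟨b, hbp, fun r => ⟨⟨fun hr m => ?_, fun h => ?_⟩, ⟨fun hr m => ?_, fun h => ?_⟩⟩⟩
  · exact eq_zero _ (hpid.mul_mem_right_s1 (hpid.mul_mem_right_s1 hr m) b)
      fun q hq hqp => (hid q hq).mul_mem_left_s1 _ (hb q ⟨hq, hqp⟩)
  · refine (hp.1.mem_or_mem fun m => ?_).resolve_right hbp
    simpa [h m] using hpid.zero_mem_s1
  · exact eq_zero _ (hpid.mul_mem_left_s1 _ hr)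
      fun q hq hqp => (hid q hq).mul_mem_right_s1 ((hid q hq).mul_mem_right_s1 (hb q ⟨hq, hqp⟩) m) r
  · refine (hp.1.mem_or_mem fun m => ?_).resolve_left hbp
    simpa [h m] using hpid.zero_mem_s1

end Ideals

section Localization

variable {R Q : Type*} [Ring R] [Ring Q] {S : Set R} {f : R →+* Q}

theorem eq_zero_of_lAss_eq_zero (hass : lAss S = ({0} : Set R)) {s r : R} (hs : s ∈ S)
    (h : s * r = 0) : r = 0 := by
  have hr : r ∈ lAss S := ⟨s, hs, h⟩
  rwa [hass] at hr

theorem IsLeftDenominatorSet.eq_zero_of_mul_eq_zero (hS : IsLeftDenominatorSet S)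
    (hass : lAss S = ({0} : Set R)) {s r : R} (hs : s ∈ S) (h : r * s = 0) : r = 0 :=
  let ⟨_, ht, htr⟩ := hS.2.2 r s hs h
  eq_zero_of_lAss_eq_zero hass ht htr

theorem IsLeftLocalization.injective (hf : IsLeftLocalization S f)
    (hass : lAss S = ({0} : Set R)) : Function.Injective f :=
  (injective_iff_map_eq_zero f).2 fun r hr => by simpa [hass] using (hf.ker r).1 hr

theorem map_mem_locSet (hS : IsMulSet S) {A : Set R} {a : R} (ha : a ∈ A) :
    f a ∈ locSet f S A :=
  ⟨1, hS.1, a, ha, by simp⟩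

theorem map_mem_locSet_iff (hS : IsMulSet S) (hf : IsLeftLocalization S f)
    (hass : lAss S = ({0} : Set R)) {A : Set R} (hsat : ∀ t ∈ S, ∀ r, t * r ∈ A → r ∈ A)
    {r : R} : f r ∈ locSet f S A ↔ r ∈ A := by
  refine ⟨fun ⟨s, hs, a, ha, e⟩ => hsat s hs r ?_, map_mem_locSet hS⟩
  have hsr : s * r = a := hf.injective hass (by rw [map_mul, e])
  exact hsr ▸ ha

theorem locSet_zero (hS : IsMulSet S) (hf : IsLeftLocalization S f) :
    locSet f S ({0} : Set R) = ({0} : Set Q) := by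
  ext q
  refine ⟨fun ⟨s, hs, _, h0, e⟩ => ?_, fun hq => ⟨1, hS.1, 0, rfl, by simpa using hq⟩⟩
  rw [h0, map_zero] at e
  exact (hf.isUnit s hs).mul_right_eq_zero.1 e

theorem isIdealSet_locSet (hS : IsLeftDenominatorSet S) (hf : IsLeftLocalization S f)
    {A : Set R} (hA : IsIdealSet A) (hsat : ∀ t ∈ S, ∀ r, r * t ∈ A → r ∈ A) :
    IsIdealSet (locSet f S A) := by
  obtain ⟨⟨h1S, -, hmulS⟩, hOre, -⟩ := hS
  refine ⟨⟨1, h1S, 0, hA.zero_mem_s1, by simp⟩, ?_, ?_, fun q ⟨s, hs, a, ha, e⟩ p => ⟨?_, ?_⟩⟩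
  · rintro q₁ ⟨s₁, hs₁, a₁, ha₁, e₁⟩ q₂ ⟨s₂, hs₂, a₂, ha₂, e₂⟩
    obtain ⟨u, hu, v, he⟩ := hOre s₁ s₂ hs₂
    refine ⟨u * s₁, hmulS _ hu _ hs₁, u * a₁ + v * a₂,
      hA.add_mem_s1 (hA.mul_mem_left_s1 u ha₁) (hA.mul_mem_left_s1 v ha₂), ?_⟩
    calc f (u * s₁) * (q₁ + q₂) = f u * (f s₁ * q₁) + f (v * s₂) * q₂ := by
          rw [← he]; simp only [map_mul, mul_add, mul_assoc]
      _ = f (u * a₁ + v * a₂) := by rw [e₁, map_mul, mul_assoc, e₂]; simp only [map_add, map_mul]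
  · rintro q ⟨s, hs, a, ha, e⟩
    exact ⟨s, hs, -a, hA.neg_mem_s1 ha, by rw [mul_neg, e, map_neg]⟩
  · obtain ⟨t, ht, r, hr⟩ := hf.surj p
    obtain ⟨u, hu, v, hu'⟩ := hOre r s hs
    refine ⟨u * t, hmulS _ hu _ ht, v * a, hA.mul_mem_left_s1 v ha, ?_⟩
    calc f (u * t) * (p * q) = f (u * r) * q := by
          rw [map_mul, map_mul, ← hr]; simp only [mul_assoc]
      _ = f (v * a) := by rw [hu', map_mul, mul_assoc, e, map_mul]
  · obtain ⟨t, ht, r, hr⟩ := hf.surj p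
    obtain ⟨u, hu, a', hu'⟩ := hOre a t ht
    have ha' : a' ∈ A := hsat t ht a' (hu' ▸ hA.mul_mem_left_s1 u ha)
    refine ⟨u * s, hmulS _ hu _ hs, a' * r, hA.mul_mem_right_s1 ha' r, ?_⟩
    calc f (u * s) * (q * p) = f (u * a) * p := by
          rw [map_mul, map_mul, ← e]; simp only [mul_assoc]
      _ = f (a' * r) := by rw [hu', map_mul, mul_assoc, hr, map_mul]

theorem locSet_inter_subset (hS : IsLeftDenominatorSet S) (hf : IsLeftLocalization S f)
    (hass : lAss S = ({0} : Set R)) {A B : Set R} (hA : IsIdealSet A) (hB : IsIdealSet B) :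
    locSet f S A ∩ locSet f S B ⊆ locSet f S (A ∩ B) := by
  rintro q ⟨⟨s, hs, a, ha, e⟩, ⟨t, ht, b, hb, e'⟩⟩
  obtain ⟨u, hu, v, huv⟩ := hS.2.1 t s hs
  have h1 : f (u * t) * q = f (u * b) := by rw [map_mul, mul_assoc, e', map_mul]
  have h2 : f (u * t) * q = f (v * a) := by rw [huv, map_mul, mul_assoc, e, map_mul]
  have hab : u * b = v * a := hf.injective hass (h1.symm.trans h2)
  exact ⟨u * t, hS.1.2.2 _ hu _ ht, u * b,
    ⟨hab ▸ hA.mul_mem_left_s1 v ha, hB.mul_mem_left_s1 u hb⟩, h1⟩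

theorem sInter_image_locSet_subset (hS : IsLeftDenominatorSet S) (hf : IsLeftLocalization S f)
    (hass : lAss S = ({0} : Set R)) {F : Set (Set R)} (hF : F.Finite)
    (hFid : ∀ A ∈ F, IsIdealSet A) : ⋂₀ (locSet f S '' F) ⊆ locSet f S (⋂₀ F) := by
  induction F, hF using Set.Finite.induction_on with
  | empty =>
    intro q _
    obtain ⟨s, hs, r, hr⟩ := hf.surj q
    exact ⟨s, hs, r, by simp, hr⟩
  | @insert A G _ hG ih =>
    have hGid := fun B hB => hFid B (Set.mem_insert_of_mem A hB)
    rw [Set.image_insert_eq, Set.sInter_insert, Set.sInter_insert]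
    exact (Set.inter_subset_inter_right _ (ih hGid)).trans <| locSet_inter_subset hS hf hass
      (hFid A (Set.mem_insert A G)) (IsIdealSet.sInter hGid)

theorem isPrimeIdealSet_locSet (hS : IsLeftDenominatorSet S) (hf : IsLeftLocalization S f)
    (hass : lAss S = ({0} : Set R)) {P : Set R} (hP : IsPrimeIdealSet P)
    (hl : ∀ t ∈ S, ∀ r, t * r ∈ P → r ∈ P) (hr : ∀ t ∈ S, ∀ r, r * t ∈ P → r ∈ P) :
    IsPrimeIdealSet (locSet f S P) := by
  have hid : IsIdealSet (locSet f S P) := isIdealSet_locSet hS hf hP.1 hr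
  have hmem : ∀ r, f r ∈ locSet f S P ↔ r ∈ P := fun _ => map_mem_locSet_iff hS.1 hf hass hl
  refine .of_forall_mul_mem hid (fun htop => hP.1.one_notMem hP.2.1 ?_) fun α β h => ?_
  · exact (hmem 1).1 (by simp [htop])
  obtain ⟨s, hs, a, ha⟩ := hf.surj α
  obtain ⟨t, ht, b, hb⟩ := hf.surj β
  have hab : ∀ m, a * m * b ∈ P := fun m => (hmem _).1 <| by
    have hm : f s * (α * f (m * t) * β) = f (a * m * b) := by
      simp only [map_mul, ← hb, ← ha, mul_assoc]
    exact hm ▸ hid.mul_mem_left_s1 (f s) (h (f (m * t)))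
  exact (hP.mem_or_mem hab).imp (fun haP => ⟨s, hs, a, haP, ha⟩) fun hbP => ⟨t, ht, b, hbP, hb⟩

theorem IsPrimeIdealSet.exists_locSet_subset (hS : IsLeftDenominatorSet S)
    (hf : IsLeftLocalization S f) (hass : lAss S = ({0} : Set R)) {F : Set (Set R)} (hF : F.Finite)
    (hFid : ∀ A ∈ F, IsIdealSet A) (hFloc : ∀ A ∈ F, IsIdealSet (locSet f S A))
    (hF0 : ⋂₀ F = ({0} : Set R)) {J : Set Q} (hJ : IsPrimeIdealSet J) :
    ∃ A ∈ F, locSet f S A ⊆ J := by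
  by_contra! hno
  obtain ⟨x, hx, hxJ⟩ := hJ.exists_mem_sInter_notMem (hF.image _)
    (Set.forall_mem_image.2 hFloc) (Set.forall_mem_image.2 hno)
  have hx0 : x ∈ locSet f S ({0} : Set R) :=
    hF0 ▸ sInter_image_locSet_subset hS hf hass hF hFid hx
  rw [locSet_zero hS.1 hf, Set.mem_singleton_iff] at hx0
  exact hxJ (hx0 ▸ hJ.1.zero_mem_s1)

end Localization

section MinimalPrimes

variable {R Q : Type*} [Ring R] [Ring Q] {S : Set R} {f : R →+* Q}

theorem mem_minPrime_of_mul_mem (hS : IsLeftDenominatorSet S) (hass : lAss S = ({0} : Set R))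
    (hR : IsSemiprimeRing R) (hfin : (minPrimes R).Finite) {p : Set R} (hp : p ∈ minPrimes R)
    {t : R} (ht : t ∈ S) (r : R) : (t * r ∈ p → r ∈ p) ∧ (r * t ∈ p → r ∈ p) := by
  obtain ⟨b, -, hb⟩ := hR.exists_minPrime_eq_annihilator hfin hp
  refine ⟨fun h => (hb r).1.2 fun m => ?_, fun h => (hb r).2.2 fun m => ?_⟩
  · exact eq_zero_of_lAss_eq_zero hass ht (by simpa [mul_assoc] using (hb _).1.1 h m)
  · exact hS.eq_zero_of_mul_eq_zero hass ht (by simpa [mul_assoc] using (hb _).2.1 h m)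

theorem isPrimeIdealSet_locSet_of_mem_minPrimes (hS : IsLeftDenominatorSet S)
    (hf : IsLeftLocalization S f) (hass : lAss S = ({0} : Set R)) (hR : IsSemiprimeRing R)
    (hfin : (minPrimes R).Finite) {p : Set R} (hp : p ∈ minPrimes R) :
    IsPrimeIdealSet (locSet f S p) :=
  isPrimeIdealSet_locSet hS hf hass hp.1
    (fun _ ht r => (mem_minPrime_of_mul_mem hS hass hR hfin hp ht r).1)
    (fun _ ht r => (mem_minPrime_of_mul_mem hS hass hR hfin hp ht r).2)

theorem map_mem_locSet_minPrime_iff (hS : IsLeftDenominatorSet S)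
    (hf : IsLeftLocalization S f) (hass : lAss S = ({0} : Set R)) (hR : IsSemiprimeRing R)
    (hfin : (minPrimes R).Finite) {p : Set R} (hp : p ∈ minPrimes R) {r : R} :
    f r ∈ locSet f S p ↔ r ∈ p :=
  map_mem_locSet_iff hS.1 hf hass fun _ ht r =>
    (mem_minPrime_of_mul_mem hS hass hR hfin hp ht r).1

theorem exists_minPrime_locSet_subset (hS : IsLeftDenominatorSet S)
    (hf : IsLeftLocalization S f) (hass : lAss S = ({0} : Set R)) (hR : IsSemiprimeRing R)
    (hfin : (minPrimes R).Finite) {J : Set Q} (hJ : IsPrimeIdealSet J) :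
    ∃ p ∈ minPrimes R, locSet f S p ⊆ J :=
  hJ.exists_locSet_subset hS hf hass hfin (fun _ hp => hp.1.1)
    (fun _ hp => (isPrimeIdealSet_locSet_of_mem_minPrimes hS hf hass hR hfin hp).1)
    hR.sInter_minPrimes

theorem locSet_mem_minPrimes (hS : IsLeftDenominatorSet S)
    (hf : IsLeftLocalization S f) (hass : lAss S = ({0} : Set R)) (hR : IsSemiprimeRing R)
    (hfin : (minPrimes R).Finite) {p : Set R} (hp : p ∈ minPrimes R) :
    locSet f S p ∈ minPrimes Q := by
  refine ⟨isPrimeIdealSet_locSet_of_mem_minPrimes hS hf hass hR hfin hp, fun J hJ hJp => ?_⟩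
  obtain ⟨q, hq, hqJ⟩ := exists_minPrime_locSet_subset hS hf hass hR hfin hJ
  have hqp : q ⊆ p := fun r hr => (map_mem_locSet_minPrime_iff hS hf hass hR hfin hp).1
    (hJp (hqJ ((map_mem_locSet_minPrime_iff hS hf hass hR hfin hq).2 hr)))
  exact hJp.antisymm (hp.2 q hq.1 hqp ▸ hqJ)

end MinimalPrimes

/-- If `R` is a semiprime ring with finitely many minimal primes
and `S ∈ Den_l(R, 0)`, then `min(S⁻¹R) = { S⁻¹𝔭 | 𝔭 ∈ min(R) }`; the map
`𝔭 ↦ S⁻¹𝔭` is a bijection `min(R) → min(S⁻¹R)` and `|min(S⁻¹R)| = |min(R)|`. -/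
theorem statement1 {R Q : Type*} [Ring R] [Ring Q]
    {S : Set R} (hS : IsLeftDenominatorSet S) (hass : lAss S = ({0} : Set R))
    (f : R →+* Q) (hf : IsLeftLocalization S f)
    (hR : IsSemiprimeRing R) (hfin : (minPrimes R).Finite) :
    minPrimes Q = locSet f S '' minPrimes R ∧
    Set.InjOn (locSet f S) (minPrimes R) ∧
    (minPrimes Q).ncard = (minPrimes R).ncard := by
  have hinj : Set.InjOn (locSet f S) (minPrimes R) := fun p hp q hq hpq => Set.ext fun r => by
    rw [← map_mem_locSet_minPrime_iff hS hf hass hR hfin hp,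
      ← map_mem_locSet_minPrime_iff hS hf hass hR hfin hq, hpq]
  have himage : minPrimes Q = locSet f S '' minPrimes R := by
    refine Set.Subset.antisymm (fun J hJ => ?_) (Set.image_subset_iff.2 fun p hp =>
      locSet_mem_minPrimes hS hf hass hR hfin hp)
    obtain ⟨p, hp, hpJ⟩ := exists_minPrime_locSet_subset hS hf hass hR hfin hJ.1
    exact ⟨p, hp, hJ.2 _ (isPrimeIdealSet_locSet_of_mem_minPrimes hS hf hass hR hfin hp) hpJ⟩
  exact ⟨himage, hinj, by rw [himage, hinj.ncard_image]⟩

end BavulaMinPrimes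
end

section
/- Let R be a semiprime ring with finitely many minimal prime ideals and S ∈ Den_l(R, 0) a left denominator set with ass_l(S) = 0. Then for every 𝔭 ∈ min(R), the image π_𝔭(S) of S under the projection π_𝔭 : R → R/𝔭 is a left denominator set of R/𝔭 with ass_l(π_𝔭(S)) = 0, and there are ring isomorphisms π_𝔭(S)⁻¹(R/𝔭) ≅ S⁻¹R / S⁻¹𝔭 ≅ S⁻¹(R/𝔭). -/
/-!
Let `𝔭'` be the intersection of the minimal primes other than `𝔭`. Every prime contains a minimal
prime, so semiprimeness gives `𝔭 ∩ 𝔭' = 0`, and since there are only finitely many minimal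
primes, `𝔭' ⊄ 𝔭`. If `s r ∈ 𝔭` with `s ∈ S`, then `s r 𝔭' = 0`, so `r 𝔭' ⊆ ass_l(S) = 0` and
`r ∈ 𝔭` by primality; symmetrically `r s ∈ 𝔭` gives `𝔭' r s = 0`, hence `𝔭' r = 0` by the
denominator property. So the elements of `S` are regular modulo `𝔭`, which makes `π_𝔭(S)` a
left denominator set with `ass_l = 0`. Identifying `S⁻¹R` with Mathlib's Ore localization, its
universal property gives `S⁻¹R → π_𝔭(S)⁻¹(R/𝔭)`, which is onto with kernel `S⁻¹𝔭`.
-/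

namespace BavulaMinPrimes

section PrimeIdeals

variable {R : Type*} [Ring R]

lemma IsIdealSet.sInter_s2 {C : Set (Set R)} (h : ∀ I ∈ C, IsIdealSet I) : IsIdealSet (⋂₀ C) :=
  ⟨fun I hI => (h I hI).1, fun a ha b hb I hI => (h I hI).2.1 a (ha I hI) b (hb I hI),
    fun a ha I hI => (h I hI).2.2.1 a (ha I hI), fun a ha r =>
    ⟨fun I hI => ((h I hI).2.2.2 a (ha I hI) r).1, fun I hI => ((h I hI).2.2.2 a (ha I hI) r).2⟩⟩

lemma IsPrimeIdealSet.one_notMem {P : Set R} (hP : IsPrimeIdealSet P) : (1 : R) ∉ P :=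
  fun h1 => hP.2.1 (Set.eq_univ_of_forall fun r => by simpa using (hP.1.2.2.2 1 h1 r).1)

lemma IsPrimeIdealSet.sInter_of_isChain_s2 {C : Set (Set R)} (hC : IsChain (· ⊆ ·) C)
    (hne : C.Nonempty) (hCp : ∀ P ∈ C, IsPrimeIdealSet P) : IsPrimeIdealSet (⋂₀ C) := by
  obtain ⟨P₀, hP₀⟩ := hne
  refine ⟨IsIdealSet.sInter_s2 fun I hI => (hCp I hI).1,
    fun h => (hCp P₀ hP₀).one_notMem (Set.mem_sInter.mp (h ▸ Set.mem_univ 1) P₀ hP₀), ?_⟩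
  intro A B hA hB hAB
  refine or_iff_not_imp_left.2 fun hAC => ?_
  obtain ⟨a, haA, haC⟩ := Set.not_subset.mp hAC
  obtain ⟨P₁, hP₁C, haP₁⟩ : ∃ P₁ ∈ C, a ∉ P₁ := by simpa using haC
  have hAB' : ∀ P ∈ C, A ⊆ P ∨ B ⊆ P := fun P hP =>
    (hCp P hP).2.2 A B hA hB fun a ha b hb => Set.mem_sInter.mp (hAB a ha b hb) P hP
  intro b hb P hPC
  rcases hC.total hPC hP₁C with hPP₁ | hP₁P
  · exact ((hAB' P hPC).resolve_left fun h => haP₁ (hPP₁ (h haA))) hb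
  · exact hP₁P (((hAB' P₁ hP₁C).resolve_left fun h => haP₁ (h haA)) hb)

lemma exists_minPrimes_subset {P : Set R} (hP : IsPrimeIdealSet P) :
    ∃ P₀ ∈ minPrimes R, P₀ ⊆ P := by
  obtain ⟨m, hmP, hm⟩ := zorn_superset_nonempty {Q : Set R | IsPrimeIdealSet Q ∧ Q ⊆ P}
    (fun C hCP hC hne => ⟨⋂₀ C, ⟨.sInter_of_isChain hC hne fun Q hQ => (hCP hQ).1,
      hne.elim fun Q hQ => (Set.sInter_subset_of_mem hQ).trans (hCP hQ).2⟩,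
      fun _ hQ => Set.sInter_subset_of_mem hQ⟩) P ⟨hP, subset_rfl⟩
  exact ⟨m, ⟨hm.1.1, fun Q hQ hQm => hQm.antisymm (hm.2 ⟨hQ, hQm.trans hm.1.2⟩ hQm)⟩, hm.1.2⟩

lemma IsPrimeIdealSet.exists_subset_of_sInter_subset {P : Set R} (hP : IsPrimeIdealSet P)
    {T : Set (Set R)} (hT : T.Finite) (hTp : ∀ Q ∈ T, IsPrimeIdealSet Q) (h : ⋂₀ T ⊆ P) :
    ∃ Q ∈ T, Q ⊆ P := by
  induction T, hT using Set.Finite.induction_on with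
  | empty => exact absurd (h (by simp : (1 : R) ∈ ⋂₀ ∅)) hP.one_notMem
  | @insert Q T _ _ ih =>
    have hQ := hTp Q (Set.mem_insert _ _)
    have hT' : ∀ Q ∈ T, IsPrimeIdealSet Q := fun Q' hQ' => hTp Q' (Set.mem_insert_of_mem _ hQ')
    have hTideal := IsIdealSet.sInter_s2 fun I hI => (hT' I hI).1
    rw [Set.sInter_insert] at h
    rcases hP.2.2 Q (⋂₀ T) hQ.1 hTideal fun a ha b hb =>
      h ⟨(hQ.1.2.2.2 a ha b).2, (hTideal.2.2.2 b hb a).1⟩ with hQP | hTP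
    · exact ⟨Q, Set.mem_insert _ _, hQP⟩
    · obtain ⟨Q', hQ', hQ'P⟩ := ih hT' hTP
      exact ⟨Q', Set.mem_insert_of_mem _ hQ', hQ'P⟩

lemma IsSemiprimeRing.eq_zero_of_forall_mem_minPrimes (hR : IsSemiprimeRing R) {z : R}
    (hz : ∀ P ∈ minPrimes R, z ∈ P) : z = 0 := by
  have hrad : z ∈ primeRadicalSet R := fun P hP =>
    let ⟨P₀, hP₀, hP₀P⟩ := exists_minPrimes_subset hP
    hP₀P (hz P₀ hP₀)
  rwa [hR] at hrad

lemma IsSemiprimeRing.exists_isIdealSet_not_subset_of_mem_minPrimes (hR : IsSemiprimeRing R)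
    (hfin : (minPrimes R).Finite) {p : Set R} (hp : p ∈ minPrimes R) :
    ∃ I : Set R, IsIdealSet I ∧ ¬ I ⊆ p ∧ ∀ z ∈ p, z ∈ I → z = 0 := by
  have hprime : ∀ Q ∈ minPrimes R \ {p}, IsPrimeIdealSet Q := fun Q hQ => hQ.1.1
  refine ⟨⋂₀ (minPrimes R \ {p}), .sInter fun I hI => (hprime I hI).1, fun hsub => ?_,
    fun z hzp hzI => hR.eq_zero_of_forall_mem_minPrimes fun P hP => ?_⟩
  · obtain ⟨Q, hQ, hQp⟩ :=
      hp.1.exists_subset_of_sInter_subset (hfin.subset Set.sdiff_subset) hprime hsub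
    exact hQ.2 (hp.2 Q hQ.1.1 hQp)
  · by_cases hPp : P = p
    · exact hPp ▸ hzp
    · exact Set.mem_sInter.mp hzI P ⟨hP, hPp⟩

lemma IsPrimeIdealSet.mem_of_forall_mul_eq_zero {P I : Set R} (hP : IsPrimeIdealSet P)
    (hI : IsIdealSet I) (hIP : ¬ I ⊆ P) {r : R} (hr : ∀ b ∈ I, r * b = 0) : r ∈ P := by
  have hann : IsIdealSet {x : R | ∀ b ∈ I, x * b = 0} :=
    ⟨fun b _ => zero_mul b, fun x hx y hy b hb => by rw [add_mul, hx b hb, hy b hb, add_zero],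
      fun x hx b hb => by rw [neg_mul, hx b hb, neg_zero], fun x hx r =>
      ⟨fun b hb => by rw [mul_assoc, hx b hb, mul_zero],
        fun b hb => by rw [mul_assoc]; exact hx _ (hI.2.2.2 b hb r).1⟩⟩
  refine ((hP.2.2 _ I hann hI fun x hx b hb => ?_).resolve_right hIP) hr
  rw [hx b hb]
  exact hP.1.1

lemma IsPrimeIdealSet.mem_of_forall_mul_eq_zero' {P I : Set R} (hP : IsPrimeIdealSet P)
    (hI : IsIdealSet I) (hIP : ¬ I ⊆ P) {r : R} (hr : ∀ b ∈ I, b * r = 0) : r ∈ P := by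
  have hann : IsIdealSet {x : R | ∀ b ∈ I, b * x = 0} :=
    ⟨fun b _ => mul_zero b, fun x hx y hy b hb => by rw [mul_add, hx b hb, hy b hb, add_zero],
      fun x hx b hb => by rw [mul_neg, hx b hb, neg_zero], fun x hx r =>
      ⟨fun b hb => by rw [← mul_assoc]; exact hx _ (hI.2.2.2 b hb r).2,
        fun b hb => by rw [← mul_assoc, hx b hb, zero_mul]⟩⟩
  refine ((hP.2.2 I _ hI hann fun b hb x hx => ?_).resolve_left hIP) hr
  rw [hx b hb]
  exact hP.1.1

end PrimeIdeals

open OreLocalization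

section Localization

variable {R : Type*} [Ring R] {S : Set R}

def IsLeftDenominatorSet.toSubmonoid (hS : IsLeftDenominatorSet S) : Submonoid R where
  carrier := S
  mul_mem' ha hb := hS.1.2.2 _ ha _ hb
  one_mem' := hS.1.1

lemma IsLeftDenominatorSet.nonempty_oreSet (hS : IsLeftDenominatorSet S) :
    Nonempty (OreSet hS.toSubmonoid) := by
  refine OreLocalization.nonempty_oreSet_iff.2 ⟨fun r₁ r₂ s h => ?_, fun r s => ?_⟩
  · obtain ⟨t, ht, htr⟩ := hS.2.2 (r₁ - r₂) s s.2 (by rw [sub_mul, h, sub_self])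
    exact ⟨⟨t, ht⟩, by rwa [mul_sub, sub_eq_zero] at htr⟩
  · obtain ⟨s', hs', r', h⟩ := hS.2.1 r s s.2
    exact ⟨r', ⟨s', hs'⟩, h⟩

variable {Q Q' : Type*} [Ring Q] [Ring Q']

lemma IsLeftLocalization.bijective_universalHom (hS : IsLeftDenominatorSet S) {f : R →+* Q}
    (hf : IsLeftLocalization S f) [OreSet hS.toSubmonoid] (fT : hS.toSubmonoid →* Qˣ)
    (hfT : ∀ s : hS.toSubmonoid, f s = fT s) : Function.Bijective (universalHom f fT hfT) := by
  refine ⟨(injective_iff_map_eq_zero _).2 fun x hx => ?_, fun q => ?_⟩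
  · induction x with | _ r s
    rw [universalHom_apply, Units.mul_right_eq_zero, hf.ker] at hx
    obtain ⟨t, ht, htr⟩ := hx
    rw [← zero_oreDiv' s, oreDiv_eq_iff]
    exact ⟨⟨t, ht⟩, t, by simp [htr]⟩
  · obtain ⟨s, hs, r, hq⟩ := hf.surj q
    refine ⟨r /ₒ ⟨s, hs⟩, ?_⟩
    rw [universalHom_apply, Units.inv_mul_eq_iff_eq_mul, ← hfT]
    exact hq.symm

lemma IsLeftLocalization.exists_lift (hS : IsLeftDenominatorSet S) {f : R →+* Q}
    (hf : IsLeftLocalization S f) (φ : R →+* Q') (hφ : ∀ s ∈ S, IsUnit (φ s)) :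
    ∃ h : Q →+* Q', ∀ s ∈ S, ∀ r : R, ∀ q : Q, f s * q = f r → φ s * h q = φ r := by
  let := hS.nonempty_oreSet.some
  obtain ⟨fT, hfT⟩ : ∃ fT : hS.toSubmonoid →* Qˣ, ∀ s : hS.toSubmonoid, f s = fT s :=
    ⟨IsUnit.liftRight (f.toMonoidHom.comp (Submonoid.subtype _)) fun s => hf.isUnit s s.2,
      fun _ => rfl⟩
  obtain ⟨φT, hφT⟩ : ∃ φT : hS.toSubmonoid →* Q'ˣ, ∀ s : hS.toSubmonoid, φ s = φT s :=
    ⟨IsUnit.liftRight (φ.toMonoidHom.comp (Submonoid.subtype _)) fun s => hφ s s.2,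
      fun _ => rfl⟩
  let e := RingEquiv.ofBijective _ (hf.bijective_universalHom hS fT hfT)
  refine ⟨(universalHom φ φT hφT).comp e.symm.toRingHom, fun s hs r q hq => ?_⟩
  have hq' : e.symm q = r /ₒ ⟨s, hs⟩ := by
    rw [RingEquiv.symm_apply_eq, RingEquiv.ofBijective_apply, universalHom_apply,
      Units.eq_inv_mul_iff_mul_eq, ← hfT]
    exact hq
  simp only [RingHom.comp_apply, RingEquiv.toRingHom_eq_coe, RingEquiv.coe_toRingHom, hq',
    universalHom_apply]
  rw [hφT ⟨s, hs⟩, Units.mul_inv_cancel_left]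

end Localization

section MinimalPrimes

variable {R : Type*} [Ring R] {S p : Set R}

lemma mem_of_mul_mem_of_mem_minPrimes_left (hass : lAss S = ({0} : Set R)) (hR : IsSemiprimeRing R)
    (hfin : (minPrimes R).Finite) (hp : p ∈ minPrimes R) {s r : R} (hs : s ∈ S)
    (hsr : s * r ∈ p) : r ∈ p := by
  obtain ⟨I, hI, hIp, hpI⟩ := hR.exists_isIdealSet_not_subset_of_mem_minPrimes hfin hp
  refine hp.1.mem_of_forall_mul_eq_zero hI hIp fun b hb => ?_
  have hsrb : s * (r * b) = 0 := by
    rw [← mul_assoc]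
    exact hpI _ (hp.1.1.2.2.2 _ hsr b).2 (hI.2.2.2 b hb _).1
  have hrb : r * b ∈ lAss S := ⟨s, hs, hsrb⟩
  rwa [hass] at hrb

lemma mem_of_mul_mem_of_mem_minPrimes_right (hS : IsLeftDenominatorSet S)
    (hass : lAss S = ({0} : Set R)) (hR : IsSemiprimeRing R) (hfin : (minPrimes R).Finite)
    (hp : p ∈ minPrimes R) {s r : R} (hs : s ∈ S) (hrs : r * s ∈ p) : r ∈ p := by
  obtain ⟨I, hI, hIp, hpI⟩ := hR.exists_isIdealSet_not_subset_of_mem_minPrimes hfin hp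
  refine hp.1.mem_of_forall_mul_eq_zero' hI hIp fun b hb => ?_
  have hbrs : b * r * s = 0 := by
    rw [mul_assoc]
    exact hpI _ (hp.1.1.2.2.2 _ hrs b).1 (hI.2.2.2 b hb _).2
  obtain ⟨t, ht, htbr⟩ := hS.2.2 _ s hs hbrs
  have hbr : b * r ∈ lAss S := ⟨t, ht, htbr⟩
  rwa [hass] at hbr

end MinimalPrimes

section Image

variable {R R' : Type*} [Ring R] [Ring R'] {S : Set R} {g : R →+* R'}

lemma isLeftDenominatorSet_image (hg : Function.Surjective g) (hS : IsLeftDenominatorSet S)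
    (hS0 : ∀ s ∈ S, g s ≠ 0) (hcancel : ∀ s ∈ S, ∀ r : R, g (r * s) = 0 → g r = 0) :
    IsLeftDenominatorSet (g '' S) := by
  refine ⟨⟨⟨1, hS.1.1, map_one g⟩, fun ⟨s, hs, hgs⟩ => hS0 s hs hgs, ?_⟩, ?_, ?_⟩
  · rintro _ ⟨s, hs, rfl⟩ _ ⟨t, ht, rfl⟩
    exact ⟨s * t, hS.1.2.2 s hs t ht, map_mul g s t⟩
  · rintro r' _ ⟨s, hs, rfl⟩
    obtain ⟨r, rfl⟩ := hg r'
    obtain ⟨s₁, hs₁, r₁, h⟩ := hS.2.1 r s hs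
    exact ⟨g s₁, ⟨s₁, hs₁, rfl⟩, g r₁, by rw [← map_mul, ← map_mul, h]⟩
  · rintro r' _ ⟨s, hs, rfl⟩ h0
    obtain ⟨r, rfl⟩ := hg r'
    exact ⟨1, ⟨1, hS.1.1, map_one g⟩, by rw [one_mul, hcancel s hs r (by rwa [map_mul])]⟩

lemma lAss_image_eq_singleton_zero (hg : Function.Surjective g) (h1 : (1 : R) ∈ S)
    (hcancel : ∀ s ∈ S, ∀ r : R, g (s * r) = 0 → g r = 0) :
    lAss (g '' S) = ({0} : Set R') := by
  refine Set.eq_singleton_iff_unique_mem.2 ⟨⟨1, ⟨1, h1, map_one g⟩, mul_zero 1⟩, ?_⟩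
  rintro r' ⟨_, ⟨s, hs, rfl⟩, h0⟩
  obtain ⟨r, rfl⟩ := hg r'
  exact hcancel s hs r (by rwa [map_mul])

end Image

section Lift

variable {R Q Q' : Type*} [Ring R] [Ring Q] [Ring Q'] {S : Set R} {f : R →+* Q} {φ : R →+* Q'}
  {h : Q →+* Q'}

lemma IsLeftLocalization.lift_eq_zero_iff (hf : IsLeftLocalization S f)
    (hφ : ∀ s ∈ S, IsUnit (φ s))
    (hh : ∀ s ∈ S, ∀ r : R, ∀ q : Q, f s * q = f r → φ s * h q = φ r) (q : Q) :
    h q = 0 ↔ q ∈ locSet f S {r | φ r = 0} := by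
  constructor
  · intro hq
    obtain ⟨s, hs, r, hsr⟩ := hf.surj q
    exact ⟨s, hs, r, by rw [Set.mem_ofPred_eq, ← hh s hs r q hsr, hq, mul_zero], hsr⟩
  · rintro ⟨s, hs, a, ha, hsa⟩
    rw [← (hφ s hs).mul_right_eq_zero, hh s hs a q hsa]
    exact ha

lemma IsLeftLocalization.lift_surjective (hf : IsLeftLocalization S f)
    (hφ : ∀ s ∈ S, IsUnit (φ s))
    (hh : ∀ s ∈ S, ∀ r : R, ∀ q : Q, f s * q = f r → φ s * h q = φ r)
    (hφsurj : ∀ q' : Q', ∃ s ∈ S, ∃ r : R, φ s * q' = φ r) : Function.Surjective h := by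
  intro q'
  obtain ⟨s, hs, r, hq'⟩ := hφsurj q'
  obtain ⟨u, hu⟩ := hf.isUnit s hs
  refine ⟨↑u⁻¹ * f r, (hφ s hs).mul_left_cancel ?_⟩
  rw [hq', hh s hs r]
  rw [← hu, Units.mul_inv_cancel_left]

end Lift

universe u v

/-- The factor ring `R/𝔭` is represented by a surjection `g : R → R'` with kernel `𝔭`, and the
isomorphisms `π_𝔭(S)⁻¹(R/𝔭) ≅ S⁻¹R / S⁻¹𝔭` by a surjective ring homomorphism `S⁻¹R → Q'`
with kernel `S⁻¹𝔭` commuting with the canonical maps. -/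
theorem statement2 {R Q : Type*} [Ring R] [Ring Q]
    {S : Set R} (hS : IsLeftDenominatorSet S) (hass : lAss S = ({0} : Set R))
    (f : R →+* Q) (hf : IsLeftLocalization S f)
    (hR : IsSemiprimeRing R) (hfin : (minPrimes R).Finite)
    {p : Set R} (hp : p ∈ minPrimes R)
    (R' : Type u) [Ring R'] (g : R →+* R') (hg : Function.Surjective g)
    (hker : ∀ r : R, g r = 0 ↔ r ∈ p) :
    (IsLeftDenominatorSet (g '' S) ∧ lAss (g '' S) = ({0} : Set R')) ∧
    ∀ (Q' : Type v) [Ring Q'],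
      ∀ f' : R' →+* Q', IsLeftLocalization (g '' S) f' →
        ∃ h : Q →+* Q', Function.Surjective h ∧
          (∀ q : Q, h q = 0 ↔ q ∈ locSet f S p) ∧
          ∀ r : R, h (f r) = f' (g r) := by
  have hleft : ∀ s ∈ S, ∀ r : R, g (s * r) = 0 → g r = 0 := fun s hs r h =>
    (hker r).2 (mem_of_mul_mem_of_mem_minPrimes_left hass hR hfin hp hs ((hker _).1 h))
  have hright : ∀ s ∈ S, ∀ r : R, g (r * s) = 0 → g r = 0 := fun s hs r h =>
    (hker r).2 (mem_of_mul_mem_of_mem_minPrimes_right hS hass hR hfin hp hs ((hker _).1 h))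
  have hS0 : ∀ s ∈ S, g s ≠ 0 := fun s hs h =>
    hp.1.one_notMem ((hker 1).1 (hright s hs 1 (by rwa [one_mul])))
  have hass' := lAss_image_eq_singleton_zero hg hS.1.1 hleft
  refine ⟨⟨isLeftDenominatorSet_image hg hS hS0 hright, hass'⟩, fun Q' _ f' hf' => ?_⟩
  have hφ : ∀ s ∈ S, IsUnit (f'.comp g s) := fun s hs => hf'.isUnit (g s) ⟨s, hs, rfl⟩
  obtain ⟨h, hh⟩ := hf.exists_lift hS (f'.comp g) hφ
  have hφker : {r | f'.comp g r = 0} = p := Set.ext fun r => by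
    rw [Set.mem_ofPred_eq, RingHom.comp_apply, hf'.ker, hass', Set.mem_singleton_iff, hker]
  refine ⟨h, hf.lift_surjective hφ hh fun q' => ?_, fun q => ?_, fun r => ?_⟩
  · obtain ⟨_, ⟨s, hs, rfl⟩, r', hq'⟩ := hf'.surj q'
    obtain ⟨r, rfl⟩ := hg r'
    exact ⟨s, hs, r, hq'⟩
  · rw [← hφker]
    exact hf.lift_eq_zero_iff hφ hh q
  · simpa using hh 1 hS.1.1 r (f r) (by rw [map_one, one_mul])

end BavulaMinPrimes
end
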